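/- Energy cancellation of the α-term in the LANS energy estimate: let u : ℝ³ → ℝ³ be a vector field each of whose components is a Schwartz function, and suppose div u = Σ_{i=1}^{3} ∂_{x_i} u_i = 0. Then Σ_{i,j=1}^{3} ∫_{ℝ³} [ u_i (∂_{x_i} Δu_j) u_j + (Δu_i)(∂_{x_j} u_i) u_j ] dx = 0, where Δ denotes the spatial Laplacian acting componentwise. -/

import Mathlib

open MeasureTheory Real
open scoped FourierTransform ENNReal

noncomputable section

/-- The partial derivative `∂_{x_i} f` of a function on `ℝ³`. -/
def pd (i : Fin 3) (f : EuclideanSpace ℝ (Fin 3) → ℝ) : EuclideanSpace ℝ (Fin 3) → ℝ :=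
  fun x => fderiv ℝ f x (EuclideanSpace.single i 1)

/-- The Laplacian `Δ f = Σ_i ∂_{x_i}² f` of a function on `ℝ³`. -/
def lap (f : EuclideanSpace ℝ (Fin 3) → ℝ) : EuclideanSpace ℝ (Fin 3) → ℝ :=
  fun x => ∑ i : Fin 3, pd i (pd i f) x

/-!
Write `A_{ij} = u_i (∂_i Δu_j) u_j` and `B_{ij} = (Δu_i)(∂_j u_i) u_j`. After exchanging `i` and
`j` in the first sum, the Leibniz rule gives `A_{ji} + B_{ij} = u_j ∂_j (Δu_i · u_i)`, so the
total is `Σ_i ∫ (u · ∇)(Δu_i · u_i)`. A transport term `∫ (u · ∇) g` of a divergence-free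
field vanishes: integrating by parts turns it into `-∫ (div u) g = 0`.
-/

namespace SchwartzMap

open LineDeriv

variable {D : Type*} [NormedAddCommGroup D] [NormedSpace ℝ D]

abbrev mul (f g : 𝓢(D, ℝ)) : 𝓢(D, ℝ) := pairing (ContinuousLinearMap.mul ℝ ℝ) f g

theorem lineDerivOp_mul_apply (v : D) (f g : 𝓢(D, ℝ)) (x : D) :
    ∂_{v} (mul f g) x = ∂_{v} f x * g x + f x * ∂_{v} g x := by
  simp only [lineDerivOp_apply_eq_fderiv, pairing_apply, ContinuousLinearMap.mul_apply']
  rw [fderiv_fun_mul f.differentiableAt g.differentiableAt]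
  simp only [add_apply, smul_apply, smul_eq_mul]
  ring

variable [MeasurableSpace D] [BorelSpace D] [FiniteDimensional ℝ D]
  {μ : Measure D} [μ.IsAddHaarMeasure]

theorem integrable_mul (f g : 𝓢(D, ℝ)) : Integrable (fun x ↦ f x * g x) μ :=
  (mul f g).integrable

theorem integrable_mul_mul (f g h : 𝓢(D, ℝ)) : Integrable (fun x ↦ f x * g x * h x) μ :=
  integrable_mul (mul f g) h

theorem sum_integral_mul_lineDerivOp_eq_zero {ι : Type*} [Fintype ι] (v : ι → D)
    (u : ι → 𝓢(D, ℝ)) (hdiv : ∀ x, ∑ i, ∂_{v i} (u i) x = 0) (g : 𝓢(D, ℝ)) :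
    ∑ i, ∫ x, u i x * ∂_{v i} g x ∂μ = 0 := by
  calc ∑ i, ∫ x, u i x * ∂_{v i} g x ∂μ
      = -∑ i, ∫ x, ∂_{v i} (u i) x * g x ∂μ := by
        simp only [integral_mul_lineDerivOp_right_eq_neg_left, Finset.sum_neg_distrib]
    _ = -∫ x, (∑ i, ∂_{v i} (u i) x) * g x ∂μ := by
        simp only [Finset.sum_mul]
        rw [integral_finsetSum _ fun i _ ↦ integrable_mul _ _]
    _ = 0 := by simp [hdiv]

theorem integral_mul_lineDerivOp_mul (v : D) (w f g : 𝓢(D, ℝ)) :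
    ∫ x, w x * ∂_{v} (mul f g) x ∂μ
      = ∫ x, w x * ∂_{v} f x * g x ∂μ + ∫ x, f x * ∂_{v} g x * w x ∂μ := by
  rw [← integral_add]
  · congr 1 with x
    rw [lineDerivOp_mul_apply]
    ring
  all_goals exact integrable_mul_mul _ _ _

end SchwartzMap

open LineDeriv Laplacian SchwartzMap

theorem pd_eq_lineDerivOp (i : Fin 3) (f : 𝓢(EuclideanSpace ℝ (Fin 3), ℝ)) :
    pd i f = ⇑(∂_{EuclideanSpace.single i (1 : ℝ)} f : 𝓢(EuclideanSpace ℝ (Fin 3), ℝ)) :=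
  rfl

theorem lap_eq_laplacian (f : 𝓢(EuclideanSpace ℝ (Fin 3), ℝ)) :
    lap f = ⇑(Δ f : 𝓢(EuclideanSpace ℝ (Fin 3), ℝ)) := by
  ext x
  simp [lap, pd_eq_lineDerivOp, laplacian_eq_sum (EuclideanSpace.basisFun (Fin 3) ℝ)]

/-- energy cancellation of the α-term in the LANS energy
estimate: if `u` is a divergence-free vector field on `ℝ³` with Schwartz
components, then `Σ_{i,j} ∫ [u_i (∂_{x_i} Δu_j) u_j + (Δu_i)(∂_{x_j} u_i) u_j] dx = 0`. -/
theorem alpha_term_cancellation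
    (u : Fin 3 → SchwartzMap (EuclideanSpace ℝ (Fin 3)) ℝ)
    (hdiv : ∀ x, ∑ i : Fin 3, pd i (⇑(u i)) x = 0) :
    ∑ i : Fin 3, ∑ j : Fin 3,
      ∫ x, (u i x * pd i (lap (⇑(u j))) x * u j x
              + lap (⇑(u i)) x * pd j (⇑(u i)) x * u j x) = 0 := by
  simp only [lap_eq_laplacian, pd_eq_lineDerivOp] at hdiv ⊢
  set e : Fin 3 → EuclideanSpace ℝ (Fin 3) := fun i ↦ EuclideanSpace.single i 1
  calc _ = ∑ i, ∑ j, ((∫ x, u i x * ∂_{e i} (Δ (u j)) x * u j x)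
          + ∫ x, Δ (u i) x * ∂_{e j} (u i) x * u j x) :=
        Finset.sum_congr rfl fun i _ ↦ Finset.sum_congr rfl fun j _ ↦
          integral_add (integrable_mul_mul _ _ _) (integrable_mul_mul _ _ _)
    _ = ∑ i, ∑ j, ((∫ x, u j x * ∂_{e j} (Δ (u i)) x * u i x)
          + ∫ x, Δ (u i) x * ∂_{e j} (u i) x * u j x) := by
        simp only [Finset.sum_add_distrib]
        rw [Finset.sum_comm]
    _ = ∑ i, ∑ j, ∫ x, u j x * ∂_{e j} (mul (Δ (u i)) (u i)) x := by
        simp only [integral_mul_lineDerivOp_mul]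
    _ = 0 := Finset.sum_eq_zero fun i _ ↦ sum_integral_mul_lineDerivOp_eq_zero e u hdiv _

end
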